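/- Let (M, g₀, u) solve u·Ric = D²u - n·u·g₀ and Δu = n·u. Then the vector field Y = D|Du|² - (2/n)·Δu·Du satisfies div(Y/u) = (2/u)·(|D²u|² - (Δu)²/n) ≥ 0 at points where u > 0. -/

import Mathlib

/-!
Contracting the static equation with `Du ⊗ Du` expresses `Ric(Du, Du)` through `D²u(Du, Du)`.
Substituted into the Bochner formula, the `D²u(Du, Du)` terms coming from `Δ|Du|²` and from
`Du(u⁻¹)` cancel, as do the `|Du|²` terms because `Δu = n u` (hence `∇Δu = n Du`); what remains is
`(2/u)(|D²u|² - (Δu)²/n)`, which is nonnegative by Cauchy–Schwarz on the diagonal of `D²u`.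
-/

open Matrix

namespace Matrix

variable {n : Type*} [Fintype n]

theorem trace_sq_le_card_mul_sum_sq (A : Matrix n n ℝ) :
    A.trace ^ 2 ≤ Fintype.card n * ∑ i, ∑ j, A i j ^ 2 := by
  have hdiag : A.trace ^ 2 ≤ Fintype.card n * ∑ i, A i i ^ 2 :=
    sq_sum_le_card_mul_sum_sq (s := Finset.univ) (f := A.diag)
  have hoff : ∑ i, A i i ^ 2 ≤ ∑ i, ∑ j, A i j ^ 2 :=
    Finset.sum_le_sum fun i _ =>
      Finset.single_le_sum (f := fun j => A i j ^ 2) (fun _ _ => sq_nonneg _) (Finset.mem_univ i)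
  exact hdiag.trans (by gcongr)

theorem trace_sq_div_card_le_sum_sq (A : Matrix n n ℝ) :
    A.trace ^ 2 / Fintype.card n ≤ ∑ i, ∑ j, A i j ^ 2 := by
  rcases (Fintype.card n).eq_zero_or_pos with hcard | hcard
  · rw [hcard, Nat.cast_zero, div_zero]
    exact Finset.sum_nonneg fun i _ => Finset.sum_nonneg fun j _ => sq_nonneg _
  · rw [div_le_iff₀' (by exact_mod_cast hcard)]
    exact A.trace_sq_le_card_mul_sum_sq

theorem dotProduct_mulVec_eq_of_smul_eq_sub_smul_one {R : Type*} [CommRing R] [DecidableEq n]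
    {A B : Matrix n n R} {c d : R} (h : c • A = B - d • (1 : Matrix n n R)) (v : n → R) :
    c * (v ⬝ᵥ A *ᵥ v) = v ⬝ᵥ B *ᵥ v - d * (v ⬝ᵥ v) := by
  have := congrArg (fun C => v ⬝ᵥ C *ᵥ v) h
  simpa only [smul_mulVec, dotProduct_smul, sub_mulVec, dotProduct_sub, one_mulVec,
    smul_eq_mul] using this

end Matrix

theorem dotProduct_self_eq_sum_sq {n R : Type*} [Fintype n] [Semiring R] (v : n → R) :
    v ⬝ᵥ v = ∑ i, v i ^ 2 := by
  simp only [dotProduct, sq]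

/-- Pointwise encoding (orthonormal frame, `g₀ = 1`): `Hess = D²u`,
`Δu = tr Hess`, `L = Δ|Du|²`, `DΔu = ⟨∇Δu,Du⟩`, `DY = div(Y/u)`, with the
Bochner formula and the product/chain rules for `div(Y/u)` as hypotheses. -/
theorem div_Y_negative_Lambda (n : ℕ) (hn : 3 ≤ n) {M : Type*} (x : M)
    (u : M → ℝ) (hu : 0 < u x)
    (Ric Hess : M → Matrix (Fin n) (Fin n) ℝ)
    (Du : M → Fin n → ℝ) (L DΔu DY : M → ℝ)
    (hBochner : L x = 2 * (∑ i, ∑ j, Hess x i j ^ 2)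
      + 2 * (Du x ⬝ᵥ Ric x *ᵥ Du x) + 2 * DΔu x)
    (hstatic : u x • Ric x = Hess x - ((n : ℝ) * u x) • (1 : Matrix (Fin n) (Fin n) ℝ))
    (hlap : (Hess x).trace = (n : ℝ) * u x)
    (hDΔu : DΔu x = (n : ℝ) * ∑ i, Du x i ^ 2)
    (hDY : DY x = (1 / u x) * (L x - (2 / n) * (DΔu x + (Hess x).trace ^ 2))
      - (1 / u x ^ 2) * (2 * (Du x ⬝ᵥ Hess x *ᵥ Du x)
        - (2 / n) * (Hess x).trace * ∑ i, Du x i ^ 2)) :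
    DY x = (2 / u x) * ((∑ i, ∑ j, Hess x i j ^ 2) - (Hess x).trace ^ 2 / n) ∧
      0 ≤ DY x := by
  have hn₀ : (n : ℝ) ≠ 0 := by positivity
  have hRic : u x * (Du x ⬝ᵥ Ric x *ᵥ Du x)
      = Du x ⬝ᵥ Hess x *ᵥ Du x - n * u x * ∑ i, Du x i ^ 2 := by
    rw [dotProduct_mulVec_eq_of_smul_eq_sub_smul_one hstatic, dotProduct_self_eq_sum_sq]
  have hDY_eq : DY x = (2 / u x) * ((∑ i, ∑ j, Hess x i j ^ 2) - (Hess x).trace ^ 2 / n) := by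
    rw [hDY, hBochner, hDΔu, hlap]
    field_simp
    linear_combination hRic
  have htrace : (Hess x).trace ^ 2 / n ≤ ∑ i, ∑ j, Hess x i j ^ 2 := by
    simpa using (Hess x).trace_sq_div_card_le_sum_sq
  refine ⟨hDY_eq, hDY_eq ▸ mul_nonneg (by positivity) (sub_nonneg.2 htrace)⟩
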